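/- arXiv:2302.03121 — 2 statements merged into one kernel-verified Lean document; each statement's English description precedes it below -/
import Mathlib

section
/- Let G and H be finite abelian groups and F : G → H perfect nonlinear. If some α ∈ H satisfies |F⁻¹(α)| = |G|/|H| − √|G| + √|G|/|H|, then |F⁻¹(β)| = |G|/|H| + √|G|/|H| for every β ≠ α. -/
/-!
Write `n b = |F⁻¹(b)|`. Counting the pairs `(x, a)` with `F (x + a) = F x` in two ways gives
`∑ b, n b ^ 2 = ∑ a, |{x | F (x + a) = F x}|`, and perfect nonlinearity makes each summand with
`a ≠ 0` equal to `|G| / |H|`. Together with `∑ b, n b = |G|` this fixes the variance of the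
fibre sizes: with `c = (|G| + √|G|) / |H|` one finds `∑ b, (n b - c) ^ 2 = |G|`. If
`n α = c - √|G|`, the term at `α` alone contributes `|G|`, so every other term vanishes.
-/

open Finset

theorem Finset.sum_sub_sq_univ {ι R : Type*} [Fintype ι] [CommRing R] (f : ι → R) (c : R) :
    ∑ i, (f i - c) ^ 2 = ∑ i, f i ^ 2 - 2 * c * ∑ i, f i + Fintype.card ι * c ^ 2 := by
  simp only [sub_sq, sum_add_distrib, sum_sub_distrib, ← sum_mul, ← mul_sum, sum_const,
    card_univ, nsmul_eq_mul]
  ring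

theorem eq_zero_of_sum_sq_eq_sq {ι R : Type*} [Fintype ι] [DecidableEq ι] [Ring R]
    [LinearOrder R] [IsStrictOrderedRing R] {f : ι → R} {i : ι} (h : ∑ j, f j ^ 2 = f i ^ 2)
    {j : ι} (hj : j ≠ i) : f j = 0 := by
  rw [← add_sum_erase _ _ (mem_univ i), add_eq_left,
    sum_eq_zero_iff_of_nonneg fun _ _ => sq_nonneg _] at h
  exact pow_eq_zero_iff two_ne_zero |>.mp <| h j (mem_erase.mpr ⟨hj, mem_univ j⟩)

section PerfectNonlinear

variable {G H : Type*} [AddGroup G] [Fintype G] [Fintype H] [DecidableEq H]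

theorem sum_card_fiber_sq_eq_sum_card_translate (F : G → H) :
    ∑ b, #{x | F x = b} ^ 2 = ∑ a, #{x | F (x + a) = F x} := by
  have translate (x : G) : #{a | F (x + a) = F x} = #{y | F y = F x} :=
    card_bij' (fun a _ => x + a) (fun y _ => -x + y) (by simp) (by simp) (by simp) (by simp)
  calc ∑ b, #{x | F x = b} ^ 2
      = ∑ b, ∑ x with F x = b, #{y | F y = F x} := by
        refine sum_congr rfl fun b _ => ?_
        rw [sum_congr rfl fun x hx => by rw [(mem_filter.mp hx).2], sum_const, smul_eq_mul, sq]
    _ = ∑ x, #{y | F y = F x} := sum_fiberwise _ _ _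
    _ = ∑ x, #{a | F (x + a) = F x} := sum_congr rfl fun x _ => (translate x).symm
    _ = ∑ a, #{x | F (x + a) = F x} := by simp only [card_filter]; exact sum_comm

def IsPerfectNonlinear [AddGroup H] (F : G → H) : Prop :=
  ∀ a : G, a ≠ 0 → ∀ b : H, #{x | F (x + a) - F x = b} * Fintype.card H = Fintype.card G

namespace IsPerfectNonlinear

variable [AddGroup H] {F : G → H}

theorem sum_card_fiber_sq (hF : IsPerfectNonlinear F) :
    (∑ b, #{x | F x = b} ^ 2) * Fintype.card H + Fintype.card G
      = Fintype.card G * (Fintype.card G + Fintype.card H) := by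
  classical
  have card_fixed_difference (a : G) (ha : a ≠ 0) :
      #{x | F (x + a) = F x} * Fintype.card H = Fintype.card G := by
    simpa [sub_eq_zero] using hF a ha 0
  rw [sum_card_fiber_sq_eq_sum_card_translate, ← add_sum_erase _ _ (mem_univ 0), add_mul,
    sum_mul, sum_congr rfl fun a ha => card_fixed_difference a (ne_of_mem_erase ha), sum_const,
    card_erase_of_mem (mem_univ _), card_univ, smul_eq_mul]
  simp only [add_zero, filter_true, card_univ]
  have hG : 1 ≤ Fintype.card G := Fintype.card_pos
  zify [hG]
  ring

theorem sum_sq_card_fiber_sub (hF : IsPerfectNonlinear F) :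
    ∑ b, ((#{x | F x = b} : ℝ) - (Fintype.card G / Fintype.card H + √(Fintype.card G)
      / Fintype.card H)) ^ 2 = Fintype.card G := by
  have hm : (Fintype.card H : ℝ) ≠ 0 := Nat.cast_ne_zero.mpr Fintype.card_ne_zero
  have hsum : ∑ b, (#{x | F x = b} : ℝ) = Fintype.card G := by
    exact_mod_cast (card_eq_sum_card_fiberwise fun x _ => mem_univ (F x)).symm
  have hsq : (∑ b, (#{x | F x = b} : ℝ) ^ 2) * Fintype.card H + Fintype.card G
      = Fintype.card G * (Fintype.card G + Fintype.card H) := by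
    exact_mod_cast hF.sum_card_fiber_sq
  rw [sum_sub_sq_univ, hsum, eq_div_of_mul_eq hm (eq_sub_of_add_eq hsq)]
  set s := √(Fintype.card G : ℝ)
  have hs : s ^ 2 = Fintype.card G := Real.sq_sqrt (Nat.cast_nonneg _)
  rw [← hs]
  field_simp
  ring

end IsPerfectNonlinear

end PerfectNonlinear

/-- If a preimage attains the minimal possible size, all other preimages are uniform. -/
theorem preimage_uniform_of_min_preimage
    {G H : Type*} [AddCommGroup G] [Fintype G]
    [AddCommGroup H] [Fintype H] [DecidableEq H] (F : G → H)
    (hPN : ∀ a : G, a ≠ 0 → ∀ b : H,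
      (Finset.univ.filter fun x => F (x + a) - F x = b).card * Fintype.card H
        = Fintype.card G)
    (α : H)
    (hα : ((Finset.univ.filter fun x => F x = α).card : ℝ)
        = (Fintype.card G : ℝ) / (Fintype.card H : ℝ) - Real.sqrt (Fintype.card G)
          + Real.sqrt (Fintype.card G) / (Fintype.card H : ℝ)) :
    ∀ β : H, β ≠ α →
      ((Finset.univ.filter fun x => F x = β).card : ℝ)
        = (Fintype.card G : ℝ) / (Fintype.card H : ℝ)
          + Real.sqrt (Fintype.card G) / (Fintype.card H : ℝ) := by
  intro β hβ
  set c : ℝ := Fintype.card G / Fintype.card H + √(Fintype.card G) / Fintype.card H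
  have hα_dev : (#{x | F x = α} : ℝ) - c = -√(Fintype.card G) := by
    rw [hα]; ring
  have hvar : ∑ b, ((#{x | F x = b} : ℝ) - c) ^ 2 = ((#{x | F x = α} : ℝ) - c) ^ 2 := by
    rw [IsPerfectNonlinear.sum_sq_card_fiber_sub hPN, hα_dev, neg_sq,
      Real.sq_sqrt (Nat.cast_nonneg _)]
  exact sub_eq_zero.mp (eq_zero_of_sum_sq_eq_sq hvar hβ)
end

section
/- Let p be an odd prime and F : 𝔽_{p^n} → 𝔽_{p^n} a planar function. If |Im(F)| = (p^n + 1)/2, then F is 2-to-1: one element has exactly one preimage and (p^n − 1)/2 elements have exactly two preimages. -/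
/-!
Count the pairs `(x, y)` with `F x = F y` in two ways. Planarity leaves exactly one such pair with
`y - x = a` for each `a ≠ 0`, so there are `2q - 1` of them (`q = p ^ n`); on the other hand there
are `∑ m_y ^ 2` of them, where `m_y` is the size of the fibre over `y ∈ Im F`. Together with
`∑ m_y = q` and `2 |Im F| = q + 1` this gives `∑ (m_y - 1) (m_y - 2) = 0`, and every term is
nonnegative on integers, so each fibre has one or two points.
-/

open Finset

section Fibers

variable {α β : Type*} [Fintype α] [DecidableEq β]

theorem card_collisions_eq_sum_card_fiber_sq (f : α → β) :
    #{z : α × α | f z.1 = f z.2} = ∑ y ∈ univ.image f, #{x | f x = y} ^ 2 := by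
  rw [card_eq_sum_card_fiberwise (f := fun z : α × α => f z.1) (t := univ.image f)
    fun z _ => mem_image_of_mem f (mem_univ z.1)]
  refine sum_congr rfl fun y _ => ?_
  rw [sq, ← card_product]
  congr 1
  ext z
  simp only [mem_filter, mem_univ, true_and, mem_product]
  constructor
  · rintro ⟨h, rfl⟩; exact ⟨rfl, h.symm⟩
  · rintro ⟨h1, h2⟩; exact ⟨h1.trans h2.symm, h1⟩

theorem mem_image_iff_card_fiber_ne_zero (f : α → β) (y : β) :
    y ∈ univ.image f ↔ #{x | f x = y} ≠ 0 := by
  simp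

theorem filter_card_fiber_eq [Fintype β] (f : α → β) {k : ℕ} (hk : k ≠ 0) :
    ({y | #{x | f x = y} = k} : Finset β) = (univ.image f).filter (#{x | f x = ·} = k) := by
  ext y
  rw [mem_filter, mem_filter, mem_image_iff_card_fiber_ne_zero]
  simp only [mem_univ, true_and]
  exact ⟨fun h => ⟨h ▸ hk, h⟩, And.right⟩

end Fibers

section FibreSizes

variable {ι : Type*} {s : Finset ι} {m : ι → ℕ}

theorem forall_eq_one_or_eq_two_of_sum_sq
    (h : ∑ i ∈ s, m i ^ 2 + 2 * #s = 3 * ∑ i ∈ s, m i) : ∀ i ∈ s, m i = 1 ∨ m i = 2 := by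
  have hnonneg : ∀ i ∈ s, (0 : ℤ) ≤ (m i - 1) * (m i - 2) := fun i _ => by
    rcases le_or_gt (m i) 1 with hi | hi
    · have : (m i : ℤ) ≤ 1 := by exact_mod_cast hi
      nlinarith
    · have : (2 : ℤ) ≤ m i := by exact_mod_cast hi
      nlinarith
  have hzero : ∑ i ∈ s, ((m i : ℤ) - 1) * (m i - 2) = 0 := by
    have hz : (∑ i ∈ s, m i ^ 2 + 2 * #s : ℤ) = 3 * ∑ i ∈ s, m i := by exact_mod_cast h
    push_cast at hz
    rw [sum_congr rfl fun i _ => (by ring : ((m i : ℤ) - 1) * (m i - 2) = m i ^ 2 - 3 * m i + 2),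
      sum_add_distrib, sum_sub_distrib, ← mul_sum, sum_const, nsmul_eq_mul]
    linarith
  intro i hi
  rcases mul_eq_zero.mp ((sum_eq_zero_iff_of_nonneg hnonneg).mp hzero i hi) with h | h
  · exact Or.inl (by exact_mod_cast sub_eq_zero.mp h)
  · exact Or.inr (by exact_mod_cast sub_eq_zero.mp h)

theorem card_filter_eq_one_add_card_filter_eq_two (hm : ∀ i ∈ s, m i = 1 ∨ m i = 2) :
    #{i ∈ s | m i = 1} + #{i ∈ s | m i = 2} = #s ∧
      #{i ∈ s | m i = 1} + 2 * #{i ∈ s | m i = 2} = ∑ i ∈ s, m i := by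
  simp only [card_filter, mul_sum, ← sum_add_distrib, card_eq_sum_ones s]
  constructor <;> refine sum_congr rfl fun i hi => ?_ <;> rcases hm i hi with h | h <;> simp [h]

end FibreSizes

def IsPlanar {G H : Type*} [AddGroup G] [AddGroup H] (F : G → H) : Prop :=
  ∀ a : G, a ≠ 0 → Function.Bijective fun x => F (x + a) - F x

section Planar

variable {G : Type*} [AddGroup G] [Fintype G]

theorem card_collisions_eq_sum_card_shift [DecidableEq G] {β : Type*} [DecidableEq β] (f : G → β) :
    #{z : G × G | f z.1 = f z.2} = ∑ a, #{x | f (x + a) = f x} := by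
  rw [card_eq_sum_card_fiberwise (f := fun z : G × G => -z.1 + z.2) (t := univ)
    fun _ _ => mem_univ _]
  refine sum_congr rfl fun a _ => ?_
  rw [filter_filter]
  refine card_nbij' Prod.fst (fun x => (x, x + a)) ?_ ?_ ?_ ?_
  · rintro ⟨x, y⟩ h
    simp only [coe_filter, mem_univ, true_and, Set.mem_ofPred_eq] at h ⊢
    rw [← h.2, add_neg_cancel_left, h.1]
  · intro x h
    simp only [coe_filter, mem_univ, true_and, Set.mem_ofPred_eq] at h ⊢
    exact ⟨h.symm, neg_add_cancel_left x a⟩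
  · rintro ⟨x, y⟩ h
    simp only [coe_filter, mem_univ, true_and, Set.mem_ofPred_eq] at h
    simp [← h.2]
  · intro x _
    rfl

variable {H : Type*} [AddGroup H] [DecidableEq H] {F : G → H}

theorem IsPlanar.card_shift_collisions (hF : IsPlanar F) {a : G} (ha : a ≠ 0) :
    #{x | F (x + a) = F x} = 1 := by
  simp_rw [← sub_eq_zero (a := F (_ + a))]
  exact (Fintype.existsUnique_iff_card_one _).mp ((hF a ha).existsUnique 0)

theorem IsPlanar.card_collisions_add_one [DecidableEq G] (hF : IsPlanar F) :
    #{z : G × G | F z.1 = F z.2} + 1 = 2 * Fintype.card G := by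
  rw [card_collisions_eq_sum_card_shift, ← add_sum_erase _ _ (mem_univ 0),
    sum_congr rfl fun a ha => hF.card_shift_collisions (ne_of_mem_erase ha)]
  simp only [add_zero, filter_true, card_univ, sum_const, card_erase_of_mem (mem_univ _),
    smul_eq_mul, mul_one]
  have := Fintype.card_pos (α := G)
  omega

end Planar

theorem planar_min_image_is_two_to_one_general
    (p n : ℕ) [Fact p.Prime] (hn : 0 < n)
    [Fintype (GaloisField p n)] [DecidableEq (GaloisField p n)]
    (F : GaloisField p n → GaloisField p n)
    (hF : ∀ a : GaloisField p n, a ≠ 0 →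
      Function.Bijective (fun x => F (x + a) - F x))
    (hIm : 2 * (Finset.univ.image F).card = p ^ n + 1) :
    (Finset.univ.filter fun y =>
        (Finset.univ.filter fun x => F x = y).card = 1).card = 1 ∧
    2 * (Finset.univ.filter fun y =>
        (Finset.univ.filter fun x => F x = y).card = 2).card = p ^ n - 1 ∧
    ∀ y : GaloisField p n, (Finset.univ.filter fun x => F x = y).card ≤ 2 := by
  have hcard : Fintype.card (GaloisField p n) = p ^ n := by
    rw [← Nat.card_eq_fintype_card, GaloisField.card p n hn.ne']
  have hsum : ∑ y ∈ univ.image F, #{x | F x = y} = p ^ n :=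
    (card_eq_sum_card_image F univ).symm.trans hcard
  have hsq : ∑ y ∈ univ.image F, #{x | F x = y} ^ 2 + 1 = 2 * p ^ n := by
    rw [← card_collisions_eq_sum_card_fiber_sq, ← hcard]
    exact IsPlanar.card_collisions_add_one hF
  have hfiber := forall_eq_one_or_eq_two_of_sum_sq (s := univ.image F)
    (m := fun y => #{x | F x = y}) (by omega)
  obtain ⟨hcount, hweight⟩ := card_filter_eq_one_add_card_filter_eq_two hfiber
  rw [filter_card_fiber_eq F one_ne_zero, filter_card_fiber_eq F two_ne_zero]
  refine ⟨by omega, by omega, fun y => ?_⟩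
  by_cases hy : y ∈ univ.image F
  · rcases hfiber y hy with h | h <;> omega
  · have := (mem_image_iff_card_fiber_ne_zero F y).not.mp hy
    omega

/-- A planar function with image set of minimal size `(p^n+1)/2` is 2-to-1. -/
theorem planar_min_image_is_two_to_one
    (p n : ℕ) [Fact p.Prime] (hp : Odd p) (hn : 0 < n)
    [Fintype (GaloisField p n)] [DecidableEq (GaloisField p n)]
    (F : GaloisField p n → GaloisField p n)
    (hF : ∀ a : GaloisField p n, a ≠ 0 →
      Function.Bijective (fun x => F (x + a) - F x))
    (hIm : 2 * (Finset.univ.image F).card = p ^ n + 1) :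
    (Finset.univ.filter fun y =>
        (Finset.univ.filter fun x => F x = y).card = 1).card = 1 ∧
    2 * (Finset.univ.filter fun y =>
        (Finset.univ.filter fun x => F x = y).card = 2).card = p ^ n - 1 ∧
    ∀ y : GaloisField p n, (Finset.univ.filter fun x => F x = y).card ≤ 2 :=
  planar_min_image_is_two_to_one_general p n hn F hF hIm
end
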